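/- (Sample complexity bound, scalar version of Calafiore–Campi.) Let g: Ξ → ℝ be measurable on a probability space (Ξ, P), let ξ̂₁, …, ξ̂_S be i.i.d. samples from P, and let t* = max_{s ≤ S} g(ξ̂_s). If S ≥ 1/(pv) − 1 for p, v ∈ (0,1), then with probability at least 1 − v over the samples, P(g(ξ) > t*) ≤ p. -/

import Mathlib

/-!
Let `q` be an upper `p`-quantile of `g` under `P`, i.e. `P(g > q) ≤ p` and `P(g < q) ≤ 1 - p`.
As soon as one sample reaches `q`, the maximum `t*` is at least `q` and so `P(g > t*) ≤ p`.
All `S` samples stay below `q` with probability `P(g < q)^S ≤ (1 - p)^S ≤ e^{-pS} ≤ 1/(1 + pS)`,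
which is at most `v` exactly when `S ≥ 1/(pv) - 1/p`, a consequence of `S ≥ 1/(pv) - 1`.
-/

open MeasureTheory Set
open scoped ENNReal

section IntervalContinuity

variable {α : Type*} [ConditionallyCompleteLinearOrder α] [TopologicalSpace α] [OrderTopology α]
  [DenselyOrdered α] [FirstCountableTopology α] [MeasurableSpace α] {μ : Measure α}
  {a : α} {c : ℝ≥0∞}

theorem measure_Iio_le_of_forall_lt [NoMinOrder α] (h : ∀ t < a, μ (Iic t) ≤ c) :
    μ (Iio a) ≤ c := by
  obtain ⟨u, hu_mono, hu_lt, hu_lim⟩ := exists_seq_strictMono_tendsto a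
  rw [← iUnion_Iic_eq_Iio_of_lt_of_tendsto hu_lt hu_lim,
    Monotone.measure_iUnion fun m n hmn => Iic_subset_Iic.2 (hu_mono.monotone hmn)]
  exact iSup_le fun n => h _ (hu_lt n)

theorem measure_Ioi_le_of_forall_gt [NoMaxOrder α] (h : ∀ t, a < t → μ (Ici t) ≤ c) :
    μ (Ioi a) ≤ c := by
  obtain ⟨u, hu_anti, hu_gt, hu_lim⟩ := exists_seq_strictAnti_tendsto a
  rw [← iUnion_Ici_eq_Ioi_of_lt_of_tendsto hu_gt hu_lim,
    Monotone.measure_iUnion fun m n hmn => Ici_subset_Ici.2 (hu_anti.antitone hmn)]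
  exact iSup_le fun n => h _ (hu_gt n)

end IntervalContinuity

theorem one_sub_pow_le_of_one_div_mul_sub_one_le {p v : ℝ} {S : ℕ} (hp0 : 0 < p) (hp1 : p ≤ 1)
    (hv : 0 < v) (hS : 1 / (p * v) - 1 ≤ S) : (1 - p) ^ S ≤ v := by
  have h_lin : 1 ≤ v * (S * p + 1) := by
    rw [div_sub_one (by positivity), div_le_iff₀ (by positivity)] at hS
    nlinarith
  calc (1 - p) ^ S ≤ Real.exp (-p) ^ S :=
        pow_le_pow_left₀ (by linarith) (Real.one_sub_le_exp_neg p) S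
    _ = (Real.exp (S * p))⁻¹ := by rw [← Real.exp_nat_mul, ← Real.exp_neg, mul_neg]
    _ ≤ v := by
      rw [inv_le_iff_one_le_mul₀ (Real.exp_pos _)]
      exact h_lin.trans (mul_le_mul_of_nonneg_left (Real.add_one_le_exp _) hv.le)

theorem exists_measure_Ioi_le_and_measure_Iio_le (ν : Measure ℝ) [IsProbabilityMeasure ν]
    {p : ℝ≥0∞} (hp0 : p ≠ 0) (hp1 : p < 1) : ∃ q, ν (Ioi q) ≤ p ∧ ν (Iio q) ≤ 1 - p := by
  set A := {t | ν (Ioi t) ≤ p}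
  have hA_ne : A.Nonempty := by
    have h_lim := tendsto_measure_Iic_atTop ν
    rw [measure_univ] at h_lim
    have h_lt : 1 - p < 1 := ENNReal.sub_lt_self ENNReal.one_ne_top one_ne_zero hp0
    obtain ⟨t, ht⟩ := (h_lim.eventually (lt_mem_nhds h_lt)).exists
    refine ⟨t, show ν (Ioi t) ≤ p from ?_⟩
    rw [← compl_Iic, prob_compl_eq_one_sub measurableSet_Iic]
    exact tsub_le_iff_tsub_le.1 ht.le
  have hA_bdd : BddBelow A := by
    have h_lim := tendsto_measure_Ici_atBot ν
    rw [measure_univ] at h_lim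
    obtain ⟨t, ht⟩ := (h_lim.eventually (lt_mem_nhds hp1)).exists
    exact ⟨t, fun a ha => le_of_not_gt fun hat =>
      (ht.trans_le (measure_mono (Ici_subset_Ioi.2 hat))).not_ge ha⟩
  refine ⟨sInf A, ?_, ?_⟩
  · refine measure_Ioi_le_of_forall_gt fun t ht => ?_
    obtain ⟨a, ha, hat⟩ := exists_lt_of_csInf_lt hA_ne ht
    exact (measure_mono (Ici_subset_Ioi.2 hat)).trans ha
  · refine measure_Iio_le_of_forall_lt fun t ht => ?_
    have h_gt : p < ν (Ioi t) := lt_of_not_ge fun h => (csInf_le hA_bdd h).not_gt ht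
    rw [← compl_Ioi, prob_compl_eq_one_sub measurableSet_Ioi]
    exact tsub_le_tsub_left h_gt.le 1

/-- Scalar Calafiore–Campi sample complexity bound: if `S ≥ 1/(pv) − 1`, then with
probability at least `1 − v` over `S` i.i.d. samples `ξ̂₁, …, ξ̂_S ~ P`, the level
`t* = maxₛ g(ξ̂ₛ)` satisfies `P(g(ξ) > t*) ≤ p`. -/
theorem calafiore_campi_scalar
    {Ξ : Type*} [MeasurableSpace Ξ] (P : Measure Ξ) [IsProbabilityMeasure P]
    (g : Ξ → ℝ) (hg : Measurable g)
    (p v : ℝ) (hp : p ∈ Set.Ioo (0:ℝ) 1) (hv : v ∈ Set.Ioo (0:ℝ) 1)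
    (S : ℕ) (hS : 1 / (p * v) - 1 ≤ (S : ℝ)) :
    1 - v ≤
      ((Measure.pi fun _ : Fin S => P)
        {ω : Fin S → Ξ | (P {x | (⨆ s : Fin S, g (ω s)) < g x}).toReal ≤ p}).toReal := by
  have : IsProbabilityMeasure (P.map g) := Measure.isProbabilityMeasure_map hg.aemeasurable
  obtain ⟨q, hq_gt, hq_lt⟩ := exists_measure_Ioi_le_and_measure_Iio_le (P.map g)
    (ENNReal.ofReal_pos.2 hp.1).ne' (ENNReal.ofReal_lt_one.2 hp.2)
  rw [Measure.map_apply hg measurableSet_Ioi] at hq_gt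
  rw [Measure.map_apply hg measurableSet_Iio] at hq_lt
  set μ := Measure.pi fun _ : Fin S => P
  set bad := univ.pi fun _ : Fin S => g ⁻¹' Iio q
  have h_good : badᶜ ⊆ {ω | (P {x | (⨆ s, g (ω s)) < g x}).toReal ≤ p} := by
    intro ω hω
    obtain ⟨s, -, hs⟩ : ∃ s ∈ univ, q ≤ g (ω s) := by simpa [bad] using hω
    have h_max : q ≤ ⨆ s, g (ω s) := le_ciSup_of_le (Finite.bddAbove_range _) s hs
    exact ENNReal.toReal_le_of_le_ofReal hp.1.le
      ((measure_mono fun x hx => h_max.trans_lt hx).trans hq_gt)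
  have h_bad : μ bad ≤ ENNReal.ofReal v :=
    calc μ bad = P (g ⁻¹' Iio q) ^ S := by simp [μ, bad, Measure.pi_pi]
      _ ≤ ENNReal.ofReal ((1 - p) ^ S) := by
        rw [ENNReal.ofReal_pow (sub_nonneg.2 hp.2.le), ENNReal.ofReal_sub _ hp.1.le,
          ENNReal.ofReal_one]
        gcongr
      _ ≤ ENNReal.ofReal v := ENNReal.ofReal_le_ofReal
        (one_sub_pow_le_of_one_div_mul_sub_one_le hp.1 hp.2.le hv.1 hS)
  calc 1 - v ≤ 1 - μ.real bad := by
        gcongr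
        exact ENNReal.toReal_le_of_le_ofReal hv.1.le h_bad
    _ = μ.real badᶜ :=
        (probReal_compl_eq_one_sub (MeasurableSet.univ_pi fun _ => hg measurableSet_Iio)).symm
    _ ≤ _ := measureReal_mono h_good
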